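/- arXiv:1510.08417 — 4 statements merged into one kernel-verified Lean document; each statement's English description precedes it below -/
import Mathlib

section
/- Let f and g be polynomials over ℝ with non-negative coefficients, and suppose f is a monotone simple projection of g (each variable of g is substituted by a variable of f or a non-negative constant). Then the Newton polytope of f is the image under a linear map of a face of the Newton polytope of g; in particular, the extension complexity of New(f) is at most the number of facets of New(g). -/
open MvPolynomial

/-- The Newton polytope of a polynomial: the convex hull of its exponent vectors. -/
noncomputable def newton {σ : Type*} (f : MvPolynomial σ ℝ) : Set (σ → ℝ) :=
  convexHull ℝ ((fun d : σ →₀ ℕ => fun i => (d i : ℝ)) '' (f.support : Set (σ →₀ ℕ)))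

/-- A face of a polytope `P`: the set of minimizers over `P` of a linear functional
(together with the empty set). -/
def IsFace {E : Type*} [AddCommGroup E] [Module ℝ E] (P F : Set E) : Prop :=
  F = ∅ ∨ ∃ φ : E →ₗ[ℝ] ℝ, F = {x ∈ P | ∀ y ∈ P, φ x ≤ φ y}

def IsPolytope {E : Type*} [AddCommGroup E] [Module ℝ E] (P : Set E) : Prop :=
  ∃ S : Finset E, P = convexHull ℝ (S : Set E)

/-- `P` can be described by at most `k` linear inequalities, together with
arbitrarily many linear equalities (an affine subspace); in particular if this holds
then `P` has at most `k` facets. -/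
def DescribedByIneqs {E : Type*} [AddCommGroup E] [Module ℝ E] (P : Set E) (k : ℕ) : Prop :=
  ∃ (S : AffineSubspace ℝ E) (a : Fin k → E →ₗ[ℝ] ℝ) (b : Fin k → ℝ),
    P = {x | x ∈ S ∧ ∀ i, a i x ≤ b i}

/-- `P` has extension complexity at most `k`: some polytope `Q` with at most `k` facets
maps onto `P` under an affine map. -/
def ExtComplexityLE {E : Type*} [AddCommGroup E] [Module ℝ E] (P : Set E) (k : ℕ) : Prop :=
  ∃ (m : ℕ) (Q : Set (Fin m → ℝ)), IsPolytope Q ∧ DescribedByIneqs Q k ∧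
    ∃ ℓ : (Fin m → ℝ) →ᵃ[ℝ] E, ℓ '' Q = P

/-- `f` is a monotone simple projection of `g`: each variable of `g` is substituted
by a variable of `f` or a non-negative constant. -/
def MonotoneSimpleProjection {σ τ : Type*} (f : MvPolynomial σ ℝ) (g : MvPolynomial τ ℝ) :
    Prop :=
  ∃ π : τ → MvPolynomial σ ℝ,
    (∀ i, (∃ j, π i = X j) ∨ ∃ c : ℝ, 0 ≤ c ∧ π i = MvPolynomial.C c) ∧
    f = aeval π g

/-!
Write the substitution as `x_i ↦ x_{j(i)}` or `x_i ↦ c_i ≥ 0`, and let `Z` be the set of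
variables sent to `0`. As all coefficients are non-negative, no cancellation occurs: the
exponents of `f` are exactly the images of the exponents of `g` avoiding `Z` under the linear
map `ℓ` that adds up, for each `j`, the exponents of the variables sent to `x_j`. The
functional `φ = ∑_{i ∈ Z} x_i` is non-negative on `New(g)`, and the exponents avoiding `Z` are
the vertices of the face `F = New(g) ∩ {φ = 0}`, so `New(f) = ℓ(F)`. Adding the equation
`φ = 0` to a description of `New(g)` by `k` inequalities describes `F` by `k` inequalities.
-/

section Faces

variable {E : Type*} [AddCommGroup E] [Module ℝ E]

theorem convexHull_filter_eq_zero (t : Finset E) (φ : E →ₗ[ℝ] ℝ) (hφ : ∀ y ∈ t, 0 ≤ φ y) :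
    convexHull ℝ (t.filter (φ · = 0) : Set E) = {x ∈ convexHull ℝ (t : Set E) | φ x = 0} := by
  refine Set.Subset.antisymm (convexHull_min (fun y hy => ⟨subset_convexHull ℝ _
      (Finset.mem_filter.mp hy).1, (Finset.mem_filter.mp hy).2⟩)
    ((convex_convexHull ℝ _).inter (convex_hyperplane φ.isLinear 0))) ?_
  rintro _ ⟨hx, hx0⟩
  obtain ⟨w, hw0, hw1, rfl⟩ := Finset.mem_convexHull'.mp hx
  have hterms : ∀ y ∈ t, w y * φ y = 0 :=
    (Finset.sum_eq_zero_iff_of_nonneg fun y hy => mul_nonneg (hw0 y hy) (hφ y hy)).mp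
      (by simpa only [map_sum, map_smul, smul_eq_mul] using hx0)
  have hsupp : ∀ y ∈ t, w y ≠ 0 → φ y = 0 := fun y hy hw =>
    (mul_eq_zero.mp (hterms y hy)).resolve_left hw
  refine Finset.mem_convexHull'.mpr ⟨w, fun y hy => hw0 y (Finset.mem_filter.mp hy).1, ?_, ?_⟩
  · rwa [Finset.sum_filter_of_ne hsupp]
  · exact Finset.sum_filter_of_ne fun y hy hwy => hsupp y hy (left_ne_zero_of_smul hwy)

theorem IsPolytope.sep_eq_zero {P : Set E} (hP : IsPolytope P) (φ : E →ₗ[ℝ] ℝ)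
    (hφ : ∀ x ∈ P, 0 ≤ φ x) : IsPolytope {x ∈ P | φ x = 0} := by
  obtain ⟨t, rfl⟩ := hP
  exact ⟨t.filter (φ · = 0),
    (convexHull_filter_eq_zero t φ fun y hy => hφ y (subset_convexHull ℝ _ hy)).symm⟩

theorem isFace_sep_eq_zero {P : Set E} (φ : E →ₗ[ℝ] ℝ) (hφ : ∀ x ∈ P, 0 ≤ φ x) :
    IsFace P {x ∈ P | φ x = 0} := by
  rcases Set.eq_empty_or_nonempty {x ∈ P | φ x = 0} with hempty | ⟨x₀, hx₀P, hx₀⟩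
  · exact Or.inl hempty
  refine Or.inr ⟨φ, Set.ext fun x => and_congr_right fun hx => ?_⟩
  exact ⟨fun h y hy => h ▸ hφ y hy, fun h => le_antisymm (hx₀ ▸ h x₀ hx₀P) (hφ x hx)⟩

theorem DescribedByIneqs.sep_eq_zero {P : Set E} {k : ℕ} (hP : DescribedByIneqs P k)
    (φ : E →ₗ[ℝ] ℝ) : DescribedByIneqs {x ∈ P | φ x = 0} k := by
  obtain ⟨S, a, b, rfl⟩ := hP
  refine ⟨S ⊓ (LinearMap.ker φ).toAffineSubspace, a, b, Set.ext fun x => ?_⟩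
  simp only [Set.mem_ofPred_eq, AffineSubspace.mem_inf_iff, Submodule.mem_toAffineSubspace,
    LinearMap.mem_ker]
  tauto

end Faces

section Substitution

variable {σ τ : Type*}

noncomputable def substVarOrConst (s : τ → σ ⊕ ℝ) (i : τ) : MvPolynomial σ ℝ :=
  (s i).elim X C

theorem MonotoneSimpleProjection.exists_substVarOrConst {f : MvPolynomial σ ℝ}
    {g : MvPolynomial τ ℝ} (h : MonotoneSimpleProjection f g) :
    ∃ s : τ → σ ⊕ ℝ, (∀ i c, s i = Sum.inr c → 0 ≤ c) ∧ f = aeval (substVarOrConst s) g := by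
  obtain ⟨π, hπ, rfl⟩ := h
  have hs : ∀ i, ∃ x : σ ⊕ ℝ, (∀ c, x = Sum.inr c → 0 ≤ c) ∧ π i = x.elim X C := by
    intro i
    rcases hπ i with ⟨j, hj⟩ | ⟨c, hc, hc'⟩
    · exact ⟨Sum.inl j, by simp, hj⟩
    · exact ⟨Sum.inr c, by simpa using hc, hc'⟩
  choose s hs using hs
  exact ⟨s, fun i => (hs i).1, by congr; funext i; exact (hs i).2⟩

noncomputable def expVec (d : σ →₀ ℕ) : σ → ℝ := fun i => d i

theorem newton_eq_convexHull [DecidableEq (σ → ℝ)] (f : MvPolynomial σ ℝ) :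
    newton f = convexHull ℝ (f.support.image expVec : Set (σ → ℝ)) := by
  rw [Finset.coe_image]; rfl

theorem isPolytope_newton (f : MvPolynomial σ ℝ) : IsPolytope (newton f) := by
  classical
  exact ⟨_, newton_eq_convexHull f⟩

variable [Fintype τ] (s : τ → σ ⊕ ℝ)

noncomputable def substExponent (d : τ →₀ ℕ) : σ →₀ ℕ :=
  ∑ i, (s i).elim (fun j => Finsupp.single j (d i)) 0

noncomputable def substCoeff (d : τ →₀ ℕ) : ℝ :=
  ∏ i, (s i).elim (fun _ => 1) (· ^ d i)

theorem aeval_substVarOrConst_monomial (d : τ →₀ ℕ) (a : ℝ) :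
    aeval (substVarOrConst s) (monomial d a) =
      monomial (substExponent s d) (a * substCoeff s d) := by
  rw [aeval_monomial, Finsupp.prod_fintype _ _ fun _ => pow_zero _, substExponent, substCoeff,
    ← C_mul_monomial, monomial_sum_prod, algebraMap_eq]
  congr 1
  refine Finset.prod_congr rfl fun i _ => ?_
  rcases h : s i with j | c
  · simp [substVarOrConst, h, X_pow_eq_monomial]
  · simp only [substVarOrConst, h, Sum.elim_inr, Pi.zero_apply]
    rw [← C_pow, C_apply]

theorem coeff_aeval_substVarOrConst [DecidableEq σ] (g : MvPolynomial τ ℝ) (e : σ →₀ ℕ) :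
    (aeval (substVarOrConst s) g).coeff e =
      ∑ d ∈ g.support with substExponent s d = e, g.coeff d * substCoeff s d := by
  conv_lhs => rw [g.as_sum]
  simp only [map_sum, aeval_substVarOrConst_monomial, coeff_sum, coeff_monomial,
    Finset.sum_ite, Finset.sum_const_zero, add_zero]

theorem substCoeff_nonneg (hs : ∀ i c, s i = Sum.inr c → 0 ≤ c) (d : τ →₀ ℕ) :
    0 ≤ substCoeff s d :=
  Finset.prod_nonneg fun i _ => by
    cases h : s i with
    | inl j => exact zero_le_one
    | inr c => exact pow_nonneg (hs i c h) _

theorem substCoeff_ne_zero_iff (d : τ →₀ ℕ) :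
    substCoeff s d ≠ 0 ↔ ∀ i, s i = Sum.inr 0 → d i = 0 := by
  simp only [substCoeff, ne_eq, Finset.prod_eq_zero_iff, Finset.mem_univ, true_and, not_exists]
  refine forall_congr' fun i => ?_
  cases s i <;> simp [pow_eq_zero_iff']

theorem support_aeval_substVarOrConst [DecidableEq σ] (hs : ∀ i c, s i = Sum.inr c → 0 ≤ c)
    {g : MvPolynomial τ ℝ} (hg : ∀ d, 0 ≤ g.coeff d) :
    (aeval (substVarOrConst s) g).support =
      (g.support.filter (substCoeff s · ≠ 0)).image (substExponent s) := by
  ext e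
  rw [mem_support_iff, coeff_aeval_substVarOrConst, ne_eq, Finset.sum_eq_zero_iff_of_nonneg
    fun d _ => mul_nonneg (hg d) (substCoeff_nonneg s hs d)]
  simp only [Finset.mem_filter, mem_support_iff, Finset.mem_image, not_forall, exists_prop,
    mul_eq_zero, not_or]
  exact exists_congr fun d => by tauto

variable [DecidableEq σ]

noncomputable def substLinearMap : (τ → ℝ) →ₗ[ℝ] (σ → ℝ) :=
  ∑ i, (s i).elim (fun j => LinearMap.single ℝ (fun _ => ℝ) j ∘ₗ LinearMap.proj i) 0

noncomputable def zeroedDegree : (τ → ℝ) →ₗ[ℝ] ℝ :=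
  ∑ i ∈ Finset.univ.filter (s · = Sum.inr 0), LinearMap.proj i

theorem substLinearMap_expVec (d : τ →₀ ℕ) :
    substLinearMap s (expVec d) = expVec (substExponent s d) := by
  funext j
  simp only [substLinearMap, substExponent, expVec, LinearMap.sum_apply, Finset.sum_apply,
    Finsupp.coe_finsetSum, Nat.cast_sum]
  refine Finset.sum_congr rfl fun i _ => ?_
  rcases s i with j' | c <;> simp [expVec, Pi.single_apply, Finsupp.single_apply, eq_comm]

theorem zeroedDegree_expVec_nonneg (d : τ →₀ ℕ) : 0 ≤ zeroedDegree s (expVec d) := by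
  simp only [zeroedDegree, LinearMap.sum_apply, LinearMap.proj_apply, expVec]
  positivity

theorem zeroedDegree_expVec_eq_zero_iff (d : τ →₀ ℕ) :
    zeroedDegree s (expVec d) = 0 ↔ substCoeff s d ≠ 0 := by
  simp only [substCoeff_ne_zero_iff, zeroedDegree, LinearMap.sum_apply, LinearMap.proj_apply,
    expVec, Finset.sum_eq_zero_iff_of_nonneg fun i _ => Nat.cast_nonneg _]
  simp

theorem zeroedDegree_nonneg_of_mem_newton {g : MvPolynomial τ ℝ} {x : τ → ℝ}
    (hx : x ∈ newton g) : 0 ≤ zeroedDegree s x :=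
  convexHull_min (by rintro _ ⟨d, -, rfl⟩; exact zeroedDegree_expVec_nonneg s d)
    (convex_halfSpace_ge (zeroedDegree s).isLinear 0) hx

theorem newton_aeval_substVarOrConst (hs : ∀ i c, s i = Sum.inr c → 0 ≤ c)
    {g : MvPolynomial τ ℝ} (hg : ∀ d, 0 ≤ g.coeff d) :
    newton (aeval (substVarOrConst s) g) =
      substLinearMap s '' {x ∈ newton g | zeroedDegree s x = 0} := by
  classical
  have hnonneg : ∀ y ∈ g.support.image expVec, 0 ≤ zeroedDegree s y := by
    simp only [Finset.mem_image]
    rintro _ ⟨d, -, rfl⟩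
    exact zeroedDegree_expVec_nonneg s d
  rw [newton_eq_convexHull g, ← convexHull_filter_eq_zero _ _ hnonneg, LinearMap.image_convexHull,
    newton_eq_convexHull, support_aeval_substVarOrConst s hs hg]
  congr 1
  ext x
  simp [zeroedDegree_expVec_eq_zero_iff, substLinearMap_expVec]

end Substitution

theorem newton_face_extension_of_monotone_projection_general {n m : ℕ}
    (f : MvPolynomial (Fin n) ℝ) (g : MvPolynomial (Fin m) ℝ)
    (hg : ∀ d, 0 ≤ g.coeff d)
    (hproj : MonotoneSimpleProjection f g) :
    (∃ F : Set (Fin m → ℝ), IsFace (newton g) F ∧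
      ∃ ℓ : (Fin m → ℝ) →ₗ[ℝ] (Fin n → ℝ), ℓ '' F = newton f) ∧
    (∀ k, DescribedByIneqs (newton g) k → ExtComplexityLE (newton f) k) := by
  obtain ⟨s, hs, rfl⟩ := hproj.exists_substVarOrConst
  have hnonneg : ∀ x ∈ newton g, 0 ≤ zeroedDegree s x :=
    fun _ => zeroedDegree_nonneg_of_mem_newton s
  have himage := (newton_aeval_substVarOrConst s hs hg).symm
  exact ⟨⟨_, isFace_sep_eq_zero _ hnonneg, _, himage⟩, fun k hk =>
    ⟨m, _, (isPolytope_newton g).sep_eq_zero _ hnonneg, hk.sep_eq_zero _,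
      (substLinearMap s).toAffineMap, himage⟩⟩

/-- Main Lemma: if `f`, `g` have non-negative coefficients and `f` is a monotone simple
projection of `g`, then the Newton polytope of `f` is the image under a linear map of a
face of the Newton polytope of `g`; in particular `xc(New(f)) ≤ c(New(g))`. -/
theorem newton_face_extension_of_monotone_projection {n m : ℕ}
    (f : MvPolynomial (Fin n) ℝ) (g : MvPolynomial (Fin m) ℝ)
    (hf : ∀ d, 0 ≤ f.coeff d) (hg : ∀ d, 0 ≤ g.coeff d)
    (hproj : MonotoneSimpleProjection f g) :
    (∃ F : Set (Fin m → ℝ), IsFace (newton g) F ∧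
      ∃ ℓ : (Fin m → ℝ) →ₗ[ℝ] (Fin n → ℝ), ℓ '' F = newton f) ∧
    (∀ k, DescribedByIneqs (newton g) k → ExtComplexityLE (newton f) k) :=
  newton_face_extension_of_monotone_projection_general f g hg hproj
end

section
/- If an n-variable polynomial f is a monotone affine projection of the m×m permanent, then f is a monotone simple projection of the (n+1)m × (n+1)m permanent. -/
open MvPolynomial

noncomputable def permPoly (n : ℕ) : MvPolynomial (Fin n × Fin n) ℝ :=
  ∑ σ : Equiv.Perm (Fin n), ∏ i : Fin n, X (i, σ i)

section Aux

variable {n m : ℕ}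

noncomputable def vv : Fin (n + 1) → MvPolynomial (Fin n) ℝ :=
  fun l => Fin.cases 1 (fun l' => X l') l

def cc (a0 : Fin m × Fin m → ℝ) (a : Fin m × Fin m → Fin n → ℝ)
    (p : Fin m × Fin m) : Fin (n + 1) → ℝ :=
  fun k => Fin.cases (a0 p) (a p) k

noncomputable def Bent (a0 : Fin m × Fin m → ℝ) (a : Fin m × Fin m → Fin n → ℝ) :
    Fin (n + 1) × Fin m → Fin (n + 1) × Fin m → MvPolynomial (Fin n) ℝ :=
  fun x y =>
    if y.1 = 0 then C (cc a0 a (x.2, y.2) x.1)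
    else if y.2 = x.2 then (if x.1 = 0 then vv y.1 else if x.1 = y.1 then 1 else 0)
    else 0

def Tperm (σ : Equiv.Perm (Fin m)) (κ : Fin m → Fin (n + 1)) :
    Equiv.Perm (Fin (n + 1) × Fin m) :=
  (Equiv.prodCongrLeft fun i => Equiv.swap (κ i) 0).trans
    (Equiv.prodCongrRight fun k => if k = 0 then σ else Equiv.refl _)

lemma Tperm_apply (σ : Equiv.Perm (Fin m)) (κ : Fin m → Fin (n + 1))
    (k : Fin (n + 1)) (i : Fin m) :
    Tperm σ κ (k, i) =
      (Equiv.swap (κ i) 0 k, if Equiv.swap (κ i) 0 k = 0 then σ i else i) := by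
  simp only [Tperm, Equiv.trans_apply, Equiv.prodCongrLeft_apply,
    Equiv.prodCongrRight_apply]
  split_ifs with h <;> simp [h]

lemma swap_zero_eq_zero_iff (c k : Fin (n + 1)) :
    Equiv.swap c 0 k = 0 ↔ k = c := by
  rw [Equiv.swap_apply_eq_iff, Equiv.swap_apply_right]

end Aux

section Aux2
variable {n m : ℕ} (a0 : Fin m × Fin m → ℝ) (a : Fin m × Fin m → Fin n → ℝ)

lemma Bent_one {k : Fin (n + 1)} {i : Fin m} (hk : k ≠ 0) :
    Bent a0 a (k, i) (k, i) = 1 := by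
  simp [Bent, hk]

lemma block_prod (σ : Equiv.Perm (Fin m)) (κ : Fin m → Fin (n + 1)) (i : Fin m) :
    ∏ k : Fin (n + 1), Bent a0 a (k, i) (Tperm σ κ (k, i)) =
      C (cc a0 a (i, σ i) (κ i)) * vv (κ i) := by
  rw [← Finset.mul_prod_erase Finset.univ _ (Finset.mem_univ (κ i))]
  have h1 : Bent a0 a (κ i, i) (Tperm σ κ (κ i, i)) = C (cc a0 a (i, σ i) (κ i)) := by
    rw [Tperm_apply, Equiv.swap_apply_left]
    simp [Bent]
  rw [h1]
  congr 1
  rcases eq_or_ne (κ i) 0 with h0 | h0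
  · rw [h0]
    rw [show (vv 0 : MvPolynomial (Fin n) ℝ) = 1 from rfl]
    apply Finset.prod_eq_one
    intro k hk
    rw [Finset.mem_erase] at hk
    rw [Tperm_apply, h0, Equiv.swap_self]
    simpa [hk.1] using Bent_one a0 a hk.1
  · have hmem : (0 : Fin (n + 1)) ∈ Finset.univ.erase (κ i) := by
      simp [Finset.mem_erase, Ne.symm h0]
    rw [← Finset.mul_prod_erase _ _ hmem]
    have h2 : Bent a0 a (0, i) (Tperm σ κ (0, i)) = vv (κ i) := by
      rw [Tperm_apply, Equiv.swap_apply_right]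
      simp [Bent, h0]
    rw [h2]
    have h3 : ∏ k ∈ (Finset.univ.erase (κ i)).erase 0,
        Bent a0 a (k, i) (Tperm σ κ (k, i)) = 1 := by
      apply Finset.prod_eq_one
      intro k hk
      simp only [Finset.mem_erase] at hk
      rw [Tperm_apply, Equiv.swap_apply_of_ne_of_ne hk.2.1 hk.1]
      simpa [hk.1] using Bent_one a0 a hk.1
    rw [h3, mul_one]

end Aux2

section Aux3
variable {n m : ℕ} (a0 : Fin m × Fin m → ℝ) (a : Fin m × Fin m → Fin n → ℝ)

lemma Tperm_injective :
    Function.Injective (fun p : Equiv.Perm (Fin m) × (Fin m → Fin (n + 1)) =>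
      Tperm p.1 p.2) := by
  rintro ⟨σ, κ⟩ ⟨σ', κ'⟩ h
  simp only at h
  have hκ : κ = κ' := by
    funext i
    have := congrArg (fun e : Equiv.Perm (Fin (n + 1) × Fin m) => (e (κ i, i)).1) h
    simp only [Tperm_apply, Equiv.swap_apply_left] at this
    have h2 := (swap_zero_eq_zero_iff (κ' i) (κ i)).mp this.symm ▸ this
    exact ((swap_zero_eq_zero_iff (κ' i) (κ i)).mp this.symm).symm ▸ rfl
  subst hκ
  have hσ : σ = σ' := by
    ext i
    have h2 := congrArg (fun e : Equiv.Perm (Fin (n + 1) × Fin m) => (e (κ i, i)).2) h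
    simp only [Tperm_apply, Equiv.swap_apply_left, if_pos rfl] at h2
    exact congrArg Fin.val h2
  rw [hσ]

lemma Bent_ne_zero_fact {τ : Equiv.Perm (Fin (n + 1) × Fin m)}
    {k : Fin (n + 1)} {i : Fin m}
    (h : Bent a0 a (k, i) (τ (k, i)) ≠ 0) (hl : (τ (k, i)).1 ≠ 0) :
    (τ (k, i)).2 = i ∧ (k = 0 ∨ k = (τ (k, i)).1) := by
  by_contra hc
  push_neg at hc
  apply h
  simp only [Bent, if_neg hl]
  split_ifs with h1 h2 h3
  · exact absurd (hc h1).1 (by simpa using h2)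
  · exact absurd h3 (hc h1).2
  · rfl
  · rfl

lemma Tperm_classify {τ : Equiv.Perm (Fin (n + 1) × Fin m)}
    (h : ∀ y, Bent a0 a y (τ y) ≠ 0) :
    ∃ σ κ, τ = Tperm σ κ := by
  -- each block has a row mapped to a main column
  have hex : ∀ i : Fin m, ∃ k, (τ (k, i)).1 = 0 := by
    intro i
    by_contra hc
    push_neg at hc
    have hsec : ∀ k, (τ (k, i)).2 = i := fun k =>
      (Bent_ne_zero_fact a0 a (h (k, i)) (hc k)).1
    have hinj : Function.Injective (fun k => (τ (k, i)).1) := by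
      intro k k' hkk
      have : τ (k, i) = τ (k', i) := Prod.ext hkk (by rw [hsec k, hsec k'])
      exact (Prod.mk.injEq _ _ _ _).mp (τ.injective this) |>.1
    obtain ⟨k, hk⟩ := Finite.surjective_of_injective hinj 0
    exact hc k hk
  set ψ : Fin m → Fin m := fun j => (τ.symm (0, j)).2 with hψ
  have hψsurj : Function.Surjective ψ := by
    intro i
    obtain ⟨k, hk⟩ := hex i
    refine ⟨(τ (k, i)).2, ?_⟩
    have : τ (k, i) = (0, (τ (k, i)).2) := Prod.ext hk rfl
    simp [hψ, ← this]
  have hψinj : Function.Injective ψ :=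
    Finite.injective_iff_surjective.mpr hψsurj
  set E : Fin m ≃ Fin m := Equiv.ofBijective ψ ⟨hψinj, hψsurj⟩ with hE
  set σ : Equiv.Perm (Fin m) := E.symm with hσ
  set κ : Fin m → Fin (n + 1) := fun i => (τ.symm (0, σ i)).1 with hκ
  have hEapp : ∀ j, E j = ψ j := fun j => rfl
  have hkey : ∀ i, τ.symm (0, σ i) = (κ i, i) := by
    intro i
    refine Prod.ext rfl ?_
    show (τ.symm (0, σ i)).2 = i
    have : ψ (σ i) = i := E.apply_symm_apply i
    exact this
  have hkey' : ∀ i, τ (κ i, i) = (0, σ i) := by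
    intro i
    rw [← hkey i, Equiv.apply_symm_apply]
  have huniq : ∀ i k, k ≠ κ i → (τ (k, i)).1 ≠ 0 := by
    intro i k hk hzero
    have h1 : τ (k, i) = (0, (τ (k, i)).2) := Prod.ext hzero rfl
    have h2 : ψ ((τ (k, i)).2) = i := by
      have : τ.symm (0, (τ (k, i)).2) = (k, i) := by rw [← h1, Equiv.symm_apply_apply]
      simp [hψ, this]
    have h3 : (τ (k, i)).2 = σ i := by
      apply hψinj
      rw [h2]
      exact (E.apply_symm_apply i).symm
    have h4 : τ.symm (0, σ i) = (k, i) := by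
      rw [← h3, ← h1, Equiv.symm_apply_apply]
    rw [hkey i] at h4
    exact hk (congrArg Prod.fst h4).symm
  refine ⟨σ, κ, ?_⟩
  ext ⟨k, i⟩ : 1
  rcases eq_or_ne k (κ i) with hk | hk
  · subst hk
    rw [hkey' i, Tperm_apply, Equiv.swap_apply_left, if_pos rfl]
  · have hne : (τ (k, i)).1 ≠ 0 := huniq i k hk
    obtain ⟨hsec, hdisj⟩ := Bent_ne_zero_fact a0 a (h (k, i)) hne
    rcases hdisj with hk0 | hkl
    · -- k = 0, so κ i ≠ 0, and τ (0, i) = (κ i, i)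
      subst hk0
      have hκne : κ i ≠ 0 := fun hc => hk hc.symm
      have hl : (τ (0, i)).1 = κ i := by
        by_contra hlne
        set l := (τ (0, i)).1 with hldef
        have hlne0 : l ≠ 0 := hne
        have hlneκ : l ≠ κ i := hlne
        have hne2 : (τ (l, i)).1 ≠ 0 := huniq i l hlneκ
        obtain ⟨hsec2, hdisj2⟩ := Bent_ne_zero_fact a0 a (h (l, i)) hne2
        rcases hdisj2 with hl0 | hll
        · exact hlne0 hl0
        · have : τ (l, i) = τ (0, i) := by
            refine Prod.ext ?_ (by rw [hsec2, hsec])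
            rw [← hll]
          have := τ.injective this
          exact hlne0 (congrArg Prod.fst this)
      have : τ (0, i) = (κ i, i) := Prod.ext hl hsec
      rw [this, Tperm_apply, Equiv.swap_apply_right, if_neg hκne]
    · have : τ (k, i) = (k, i) := Prod.ext hkl.symm hsec
      have hk0 : k ≠ 0 := fun hc => hne (hkl.symm.trans hc)
      rw [this, Tperm_apply, Equiv.swap_apply_of_ne_of_ne hk hk0, if_neg hk0]

end Aux3

section Aux4
variable {n m : ℕ} (a0 : Fin m × Fin m → ℝ) (a : Fin m × Fin m → Fin n → ℝ)

lemma entry_sum (p : Fin m × Fin m) :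
    ∑ k : Fin (n + 1), C (cc a0 a p k) * vv k =
      (C (a0 p) + ∑ j : Fin n, C (a p j) * X j :
        MvPolynomial (Fin n) ℝ) := by
  rw [Fin.sum_univ_succ]
  simp [cc, vv]

lemma main_sum :
    ∑ τ : Equiv.Perm (Fin (n + 1) × Fin m),
        ∏ y : Fin (n + 1) × Fin m, Bent a0 a y (τ y) =
      ∑ σ : Equiv.Perm (Fin m), ∏ i : Fin m,
        (C (a0 (i, σ i)) + ∑ j : Fin n, C (a (i, σ i) j) * X j) := by
  classical
  have hzero : ∀ τ ∈ Finset.univ,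
      τ ∉ Finset.image
        (fun p : Equiv.Perm (Fin m) × (Fin m → Fin (n + 1)) => Tperm p.1 p.2)
        Finset.univ →
      ∏ y : Fin (n + 1) × Fin m, Bent a0 a y (τ y) = 0 := by
    intro τ _ hτ
    by_contra hne
    have hfac : ∀ y, Bent a0 a y (τ y) ≠ 0 := by
      intro y hy
      exact hne (Finset.prod_eq_zero (Finset.mem_univ y) hy)
    obtain ⟨σ, κ, hT⟩ := Tperm_classify a0 a hfac
    exact hτ (Finset.mem_image.mpr ⟨(σ, κ), Finset.mem_univ _, hT.symm⟩)
  rw [← Finset.sum_subset (Finset.subset_univ _) hzero,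
    Finset.sum_image (fun p _ q _ hpq => Tperm_injective hpq)]
  rw [Fintype.sum_prod_type]
  refine Finset.sum_congr rfl fun σ _ => ?_
  have hterm : ∀ κ : Fin m → Fin (n + 1),
      ∏ y : Fin (n + 1) × Fin m, Bent a0 a y (Tperm σ κ y) =
        ∏ i : Fin m, C (cc a0 a (i, σ i) (κ i)) * vv (κ i) := by
    intro κ
    rw [Fintype.prod_prod_type, Finset.prod_comm]
    exact Finset.prod_congr rfl fun i _ => block_prod a0 a σ κ i
  calc ∑ κ : Fin m → Fin (n + 1),
        ∏ y : Fin (n + 1) × Fin m, Bent a0 a y (Tperm σ κ y)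
      = ∑ κ : Fin m → Fin (n + 1),
          ∏ i : Fin m, C (cc a0 a (i, σ i) (κ i)) * vv (κ i) :=
        Finset.sum_congr rfl fun κ _ => hterm κ
    _ = ∏ i : Fin m, ∑ k : Fin (n + 1), C (cc a0 a (i, σ i) k) * vv k := by
        rw [Finset.prod_univ_sum, Fintype.piFinset_univ]
    _ = ∏ i : Fin m, (C (a0 (i, σ i)) + ∑ j : Fin n, C (a (i, σ i) j) * X j) :=
        Finset.prod_congr rfl fun i _ => entry_sum a0 a (i, σ i)

end Aux4

section Aux5
variable {n m : ℕ} (a0 : Fin m × Fin m → ℝ) (a : Fin m × Fin m → Fin n → ℝ)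

lemma Bent_shape (h0 : ∀ p, 0 ≤ a0 p) (ha : ∀ p j, 0 ≤ a p j)
    (x y : Fin (n + 1) × Fin m) :
    (∃ j, Bent a0 a x y = X j) ∨ ∃ c : ℝ, 0 ≤ c ∧ Bent a0 a x y = C c := by
  obtain ⟨k, i⟩ := x
  obtain ⟨l, j⟩ := y
  simp only [Bent]
  split_ifs with h1 h2 h3 h4
  · right
    refine ⟨cc a0 a (i, j) k, ?_, rfl⟩
    induction k using Fin.cases <;> simp [cc, h0, ha]
  · left
    rcases Fin.eq_zero_or_eq_succ l with hl | ⟨l', hl⟩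
    · exact absurd hl h1
    · exact ⟨l', by simp [hl, vv]⟩
  · exact Or.inr ⟨1, zero_le_one, (map_one C).symm⟩
  · exact Or.inr ⟨0, le_refl 0, (map_zero C).symm⟩
  · exact Or.inr ⟨0, le_refl 0, (map_zero C).symm⟩

end Aux5


/-- If an `n`-variable polynomial `f` is a monotone affine projection of the `m × m`
permanent (each variable `y_p` is replaced by the affine form
`a0 p + ∑ j (a p j) * x j` with non-negative coefficients), then `f` is a monotone
simple projection of the `(n+1)m × (n+1)m` permanent. -/
theorem monotone_affine_to_simple_projection {n m : ℕ} (f : MvPolynomial (Fin n) ℝ)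
    (a0 : Fin m × Fin m → ℝ) (a : Fin m × Fin m → Fin n → ℝ)
    (h0 : ∀ p, 0 ≤ a0 p) (ha : ∀ p j, 0 ≤ a p j)
    (hproj : f = aeval
      (fun p => MvPolynomial.C (a0 p) + ∑ j : Fin n, MvPolynomial.C (a p j) * X j)
      (permPoly m)) :
    MonotoneSimpleProjection f (permPoly ((n + 1) * m)) := by
  classical
  set e : Fin (n + 1) × Fin m ≃ Fin ((n + 1) * m) := finProdFinEquiv with he
  refine ⟨fun q => Bent a0 a (e.symm q.1) (e.symm q.2), ?_, ?_⟩
  · intro q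
    exact Bent_shape a0 a h0 ha (e.symm q.1) (e.symm q.2)
  · rw [hproj]
    simp only [permPoly, map_sum, map_prod, aeval_X]
    rw [← main_sum a0 a,
      ← Equiv.sum_comp (Equiv.permCongr e)
        (fun ρ : Equiv.Perm (Fin ((n + 1) * m)) =>
          ∏ x : Fin ((n + 1) * m), Bent a0 a (e.symm x) (e.symm (ρ x)))]
    refine Finset.sum_congr rfl fun τ _ => ?_
    simp only [Equiv.permCongr_apply, Equiv.symm_apply_apply]
    exact (Equiv.prod_comp e.symm (fun y => Bent a0 a y (τ y))).symm
end

section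
/- Every polynomial with non-negative real coefficients computable by a monotone formula of size s is a monotone simple projection of the (s+1)×(s+1) permanent. -/
open MvPolynomial

/-- Monotone formulas over ℝ: binary `+` and `×` gates, leaves are variables or
non-negative constants. -/
inductive MonFormula (n : ℕ) : Type
  | var : Fin n → MonFormula n
  | const : (c : ℝ) → 0 ≤ c → MonFormula n
  | add : MonFormula n → MonFormula n → MonFormula n
  | mul : MonFormula n → MonFormula n → MonFormula n

/-- The size of a monotone formula: its number of leaves. -/
def MonFormula.size {n : ℕ} : MonFormula n → ℕ
  | .var _ => 1
  | .const _ _ => 1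
  | .add F G => F.size + G.size
  | .mul F G => F.size + G.size

/-- The polynomial computed by a monotone formula. -/
noncomputable def MonFormula.toPoly {n : ℕ} : MonFormula n → MvPolynomial (Fin n) ℝ
  | .var v => X v
  | .const c _ => MvPolynomial.C c
  | .add F G => F.toPoly + G.toPoly
  | .mul F G => F.toPoly * G.toPoly

section Aux
variable {R : Type*} [CommSemiring R]

def arrP (A : ℕ → ℕ → R) : ℕ → R
  | 0 => 1
  | (j+1) => ∑ i : Fin (j+1), arrP A i * A i (j+1)
decreasing_by exact i.isLt

lemma arrP_zero (A : ℕ → ℕ → R) : arrP A 0 = 1 := by rw [arrP]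

lemma arrP_succ (A : ℕ → ℕ → R) (j : ℕ) :
    arrP A (j+1) = ∑ i ∈ Finset.range (j+1), arrP A i * A i (j+1) := by
  rw [arrP]
  exact Fin.sum_univ_eq_sum_range (fun i => arrP A i * A i (j+1)) (j+1)

lemma arrP_one (A : ℕ → ℕ → R) : arrP A 1 = A 0 1 := by
  rw [arrP_succ]; simp [arrP_zero]

lemma arrP_congr' {A B : ℕ → ℕ → R} :
    ∀ m, (∀ i j, j ≤ m → A i j = B i j) → arrP A m = arrP B m := by
  intro m
  induction m using Nat.strong_induction_on with
  | _ m ih =>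
    match m with
    | 0 => intro _; rw [arrP_zero, arrP_zero]
    | (j+1) =>
      intro h
      rw [arrP_succ, arrP_succ]
      refine Finset.sum_congr rfl fun i hi => ?_
      rw [Finset.mem_range] at hi
      rw [ih i (by omega) (fun a b hb => h a b (by omega)), h i (j+1) le_rfl]

def gg (x : ℕ) : ℕ := if x = 0 then 0 else x + 1

lemma arrP_split' (A : ℕ → ℕ → R) : ∀ j,
    A 0 1 * arrP (fun a b => A (a+1) (b+1)) j + arrP (fun a b => A (gg a) (gg b)) j
      = arrP A (j+1) + (if j = 0 then (1:R) else 0) := by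
  intro j
  induction j using Nat.strong_induction_on with
  | _ j ih =>
    match j with
    | 0 => simp [arrP_zero, arrP_one]
    | (j+1) =>
      set P : ℕ → ℕ → R := fun a b => A (a+1) (b+1) with hP
      set Q : ℕ → ℕ → R := fun a b => A (gg a) (gg b) with hQ
      have h0 : (0:ℕ) ∈ Finset.range (j+1) := by simp
      have key : ∀ t ∈ Finset.range (j+1),
          A 0 1 * arrP P t + (if t = 0 then 0 else arrP Q t) = arrP A (t+1) := by
        intro t ht
        rw [Finset.mem_range] at ht
        match t with
        | 0 => simp [arrP_zero, arrP_one]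
        | (s+1) =>
          have := ih (s+1) (by omega)
          simpa using this
      have hgg : ∀ t ∈ Finset.range (j+1),
          arrP Q t * Q t (j+1)
            = (if t = 0 then A 0 (j+2) else 0)
              + (if t = 0 then 0 else arrP Q t) * A (t+1) (j+2) := by
        intro t _
        rcases Nat.eq_zero_or_pos t with h | h
        · subst h; simp [arrP_zero, hQ, gg]
        · have ht : t ≠ 0 := by omega
          simp [ht, hQ, gg]
      have e1 : arrP Q (j+1)
          = A 0 (j+2) + ∑ t ∈ Finset.range (j+1), (if t = 0 then 0 else arrP Q t) * A (t+1) (j+2) := by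
        rw [arrP_succ, Finset.sum_congr rfl hgg, Finset.sum_add_distrib,
          Finset.sum_ite_eq' (Finset.range (j+1)) 0 (fun _ => A 0 (j+2)), if_pos h0]
      have e2 : A 0 1 * arrP P (j+1)
          = ∑ t ∈ Finset.range (j+1), (A 0 1 * arrP P t) * A (t+1) (j+2) := by
        rw [arrP_succ, Finset.mul_sum]
        exact Finset.sum_congr rfl fun t _ => by ring
      have main : (∑ t ∈ Finset.range (j+1), (A 0 1 * arrP P t) * A (t+1) (j+2))
            + ∑ t ∈ Finset.range (j+1), (if t = 0 then 0 else arrP Q t) * A (t+1) (j+2)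
          = ∑ t ∈ Finset.range (j+1), arrP A (t+1) * A (t+1) (j+2) := by
        rw [← Finset.sum_add_distrib]
        refine Finset.sum_congr rfl fun t ht => ?_
        rw [← add_mul, key t ht]
      have hR : arrP A (j+2)
          = A 0 (j+2) + ∑ t ∈ Finset.range (j+1), arrP A (t+1) * A (t+1) (j+2) := by
        rw [arrP_succ A (j+1), Finset.sum_range_succ' (fun i => arrP A i * A i (j+2)) (j+1),
          arrP_zero, one_mul, add_comm]
      rw [e1, e2, hR, if_neg (Nat.succ_ne_zero j), add_zero, ← main]
      ring

def CmatP (A : ℕ → ℕ → R) (m : ℕ) (k l : Fin m) : R :=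
  if (l:ℕ) ≤ (k:ℕ) then A l (k+1) else if (l:ℕ) = (k:ℕ)+1 then 1 else 0

lemma perm_CmatP : ∀ (m : ℕ) (A : ℕ → ℕ → R),
    (∑ σ : Equiv.Perm (Fin m), ∏ k, CmatP A m k (σ k)) = arrP A m
  | 0, A => by simp [arrP_zero]
  | 1, A => by
    rw [arrP_one]
    have h1 : ∀ σ : Equiv.Perm (Fin 1), (∏ k, CmatP A 1 k (σ k)) = A 0 1 := by
      intro σ
      rw [Fin.prod_univ_one]
      have h : σ 0 = 0 := Subsingleton.elim _ _
      rw [h]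
      simp [CmatP]
    rw [Finset.sum_congr rfl (fun σ _ => h1 σ), Finset.sum_const]
    simp [Fintype.card_perm]
  | (m+2), A => by
    have hA' := perm_CmatP (m+1) (fun a b => A (a+1) (b+1))
    have hA'' := perm_CmatP (m+1) (fun a b => A (gg a) (gg b))
    have hre : (∑ σ : Equiv.Perm (Fin (m+2)), ∏ k, CmatP A (m+2) k (σ k))
        = ∑ pτ : Fin (m+2) × Equiv.Perm (Fin (m+1)),
            ∏ k, CmatP A (m+2) k (Equiv.Perm.decomposeFin.symm pτ k) :=
      (Equiv.sum_comp Equiv.Perm.decomposeFin.symm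
        (fun σ => ∏ k, CmatP A (m+2) k (σ k))).symm
    have hprod : ∀ (p : Fin (m+2)) (τ : Equiv.Perm (Fin (m+1))),
        (∏ k, CmatP A (m+2) k (Equiv.Perm.decomposeFin.symm (p, τ) k))
          = CmatP A (m+2) 0 p
            * ∏ i : Fin (m+1), CmatP A (m+2) i.succ (Equiv.swap 0 p ((τ i).succ)) := by
      intro p τ
      rw [Fin.prod_univ_succ]
      simp only [Equiv.Perm.decomposeFin_symm_apply_zero,
        Equiv.Perm.decomposeFin_symm_apply_succ]
    have hC1 : ∀ (i j : Fin (m+1)),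
        CmatP A (m+2) i.succ j.succ = CmatP (fun a b => A (a+1) (b+1)) (m+1) i j := by
      intro i j
      simp only [CmatP, Fin.val_succ]
      exact if_congr (by omega) rfl (if_congr (by omega) rfl rfl)
    have hC2 : ∀ (i j : Fin (m+1)),
        CmatP A (m+2) i.succ (Equiv.swap 0 ((0:Fin (m+1)).succ) j.succ)
          = CmatP (fun a b => A (gg a) (gg b)) (m+1) i j := by
      intro i j
      rcases eq_or_ne j 0 with rfl | hj
      · rw [Equiv.swap_apply_right]
        simp [CmatP, Fin.val_succ, gg]
      · have h1 : j.succ ≠ 0 := Fin.succ_ne_zero j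
        have h2 : j.succ ≠ (0:Fin (m+1)).succ := fun h => hj (Fin.succ_injective _ h)
        rw [Equiv.swap_apply_of_ne_of_ne h1 h2]
        have hjv : (j:ℕ) ≠ 0 := fun h => hj (Fin.ext h)
        simp only [CmatP, Fin.val_succ, gg, if_neg hjv, Nat.succ_ne_zero,
          Nat.add_eq_zero, and_false, if_false]
        exact if_congr (by omega) rfl (if_congr (by omega) rfl rfl)
    have hz : ∀ p : Fin m, CmatP A (m+2) 0 p.succ.succ = 0 := by
      intro p
      rw [CmatP, if_neg (by simp [Fin.val_succ]), if_neg (by simp [Fin.val_succ])]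
    rw [hre, Fintype.sum_prod_type, Fin.sum_univ_succ, Fin.sum_univ_succ]
    have t0 : (∑ τ : Equiv.Perm (Fin (m+1)),
          ∏ k, CmatP A (m+2) k (Equiv.Perm.decomposeFin.symm ((0:Fin (m+2)), τ) k))
        = A 0 1 * arrP (fun a b => A (a+1) (b+1)) (m+1) := by
      rw [← hA', Finset.mul_sum]
      refine Finset.sum_congr rfl fun τ _ => ?_
      rw [hprod]
      have e0 : CmatP A (m+2) 0 (0:Fin (m+2)) = A 0 1 := by simp [CmatP]
      rw [e0]
      congr 1
      refine Finset.prod_congr rfl fun i _ => ?_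
      rw [Equiv.swap_self]
      simpa using hC1 i (τ i)
    have t1 : (∑ τ : Equiv.Perm (Fin (m+1)),
          ∏ k, CmatP A (m+2) k (Equiv.Perm.decomposeFin.symm ((0:Fin (m+1)).succ, τ) k))
        = arrP (fun a b => A (gg a) (gg b)) (m+1) := by
      rw [← hA'']
      refine Finset.sum_congr rfl fun τ _ => ?_
      rw [hprod]
      have hone : CmatP A (m+2) 0 ((0:Fin (m+1)).succ) = 1 := by
        simp [CmatP, Fin.val_succ]
      rw [hone, one_mul]
      exact Finset.prod_congr rfl fun i _ => hC2 i (τ i)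
    have t2 : (∑ p : Fin m, ∑ τ : Equiv.Perm (Fin (m+1)),
          ∏ k, CmatP A (m+2) k (Equiv.Perm.decomposeFin.symm (p.succ.succ, τ) k)) = 0 := by
      refine Finset.sum_eq_zero fun p _ => Finset.sum_eq_zero fun τ _ => ?_
      rw [hprod, hz, zero_mul]
    rw [t0, t1, t2, add_zero]
    have := arrP_split' A (m+1)
    rw [if_neg (Nat.succ_ne_zero m)] at this
    rw [this, add_zero]

def serC (A B : ℕ → ℕ → R) (s1 : ℕ) (i j : ℕ) : R :=
  if j ≤ s1 then A i j else if s1 ≤ i then B (i - s1) (j - s1) else 0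

lemma arrP_serC (A B : ℕ → ℕ → R) (s1 : ℕ) : ∀ k,
    arrP (serC A B s1) (s1 + k) = arrP A s1 * arrP B k := by
  have base : ∀ k, k ≤ s1 → arrP (serC A B s1) k = arrP A k := by
    intro k hk
    exact arrP_congr' k (fun i j hj => if_pos (le_trans hj hk))
  intro k
  induction k using Nat.strong_induction_on with
  | _ k ih =>
    match k with
    | 0 => rw [Nat.add_zero, base s1 le_rfl, arrP_zero, mul_one]
    | (k+1) =>
      have split := Finset.sum_range_add
        (fun i => arrP (serC A B s1) i * serC A B s1 i (s1+k+1)) s1 (k+1)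
      rw [← Nat.add_assoc] at split
      rw [show s1 + (k+1) = (s1+k)+1 from rfl, arrP_succ, split]
      have z1 : (∑ i ∈ Finset.range s1,
          arrP (serC A B s1) i * serC A B s1 i (s1+k+1)) = 0 := by
        refine Finset.sum_eq_zero fun i hi => ?_
        rw [Finset.mem_range] at hi
        rw [serC, if_neg (by omega), if_neg (by omega), mul_zero]
      have z2 : ∀ t ∈ Finset.range (k+1),
          arrP (serC A B s1) (s1+t) * serC A B s1 (s1+t) (s1+k+1)
            = arrP A s1 * (arrP B t * B t (k+1)) := by
        intro t ht
        rw [Finset.mem_range] at ht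
        rw [serC, if_neg (by omega), if_pos (by omega), ih t (by omega),
          Nat.add_sub_cancel_left, show s1 + k + 1 - s1 = k + 1 by omega, mul_assoc]
      rw [z1, zero_add, Finset.sum_congr rfl z2, ← Finset.mul_sum, arrP_succ B k]

def parC (A B : ℕ → ℕ → R) (s1 s2 : ℕ) (i j : ℕ) : R :=
  if j ≤ s1 then A i j
  else if i = s1 then (if j = s1 + s2 then 1 else 0)
  else if i = 0 then B 0 (j - s1)
  else if s1 < i then B (i - s1) (j - s1)
  else 0

lemma arrP_parC (A B : ℕ → ℕ → R) (s1 s2 : ℕ) (h1 : 1 ≤ s1) (h2 : 1 ≤ s2) :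
    arrP (parC A B s1 s2) (s1 + s2) = arrP A s1 + arrP B s2 := by
  have base : ∀ k, k ≤ s1 → arrP (parC A B s1 s2) k = arrP A k := by
    intro k hk
    exact arrP_congr' k (fun i j hj => if_pos (le_trans hj hk))
  have main : ∀ k, 1 ≤ k → k ≤ s2 →
      arrP (parC A B s1 s2) (s1 + k) = arrP B k + (if k = s2 then arrP A s1 else 0) := by
    intro k
    induction k using Nat.strong_induction_on with
    | _ k ih =>
      match k with
      | 0 => intro h; omega
      | (k+1) =>
        intro _ hk2
        have split := Finset.sum_range_add
          (fun i => arrP (parC A B s1 s2) i * parC A B s1 s2 i (s1+k+1)) s1 (k+1)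
        rw [← Nat.add_assoc] at split
        rw [show s1 + (k+1) = (s1+k)+1 from rfl, arrP_succ, split]
        have e1 : (∑ i ∈ Finset.range s1,
            arrP (parC A B s1 s2) i * parC A B s1 s2 i (s1+k+1)) = B 0 (k+1) := by
          rw [Finset.sum_eq_single_of_mem 0 (Finset.mem_range.mpr h1)]
          · rw [arrP_zero, one_mul, parC, if_neg (by omega), if_neg (by omega), if_pos rfl,
              show s1 + k + 1 - s1 = k + 1 by omega]
          · intro i hi hne
            rw [Finset.mem_range] at hi
            rw [parC, if_neg (by omega), if_neg (by omega), if_neg hne, if_neg (by omega), mul_zero]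
        have e2 : (∑ t ∈ Finset.range (k+1),
            arrP (parC A B s1 s2) (s1+t) * parC A B s1 s2 (s1+t) (s1+k+1))
            = (if k+1 = s2 then arrP A s1 else 0)
              + ∑ t ∈ Finset.range k, arrP B (t+1) * B (t+1) (k+1) := by
          rw [Finset.sum_range_succ'
            (fun t => arrP (parC A B s1 s2) (s1+t) * parC A B s1 s2 (s1+t) (s1+k+1)) k]
          have ht0 : arrP (parC A B s1 s2) (s1+0) * parC A B s1 s2 (s1+0) (s1+k+1)
              = (if k+1 = s2 then arrP A s1 else 0) := by
            rw [Nat.add_zero, base s1 le_rfl, parC, if_neg (by omega), if_pos rfl]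
            rcases eq_or_ne (k+1) s2 with h | h
            · rw [if_pos (by omega), if_pos h, mul_one]
            · rw [if_neg (by omega), if_neg h, mul_zero]
          have hts : ∀ t ∈ Finset.range k,
              arrP (parC A B s1 s2) (s1+(t+1)) * parC A B s1 s2 (s1+(t+1)) (s1+k+1)
                = arrP B (t+1) * B (t+1) (k+1) := by
            intro t ht
            rw [Finset.mem_range] at ht
            have hik := ih (t+1) (by omega) (by omega) (by omega)
            rw [if_neg (by omega), add_zero] at hik
            rw [hik, parC, if_neg (by omega), if_neg (by omega), if_neg (by omega),
              if_pos (by omega), show s1 + (t+1) - s1 = t+1 by omega,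
              show s1 + k + 1 - s1 = k + 1 by omega]
          rw [ht0, Finset.sum_congr rfl hts, add_comm]
        rw [e1, e2, arrP_succ B k,
          Finset.sum_range_succ' (fun t => arrP B t * B t (k+1)) k, arrP_zero, one_mul]
        ring
  have := main s2 h2 le_rfl
  rw [if_pos rfl] at this
  rw [this]
  exact add_comm _ _

end Aux

lemma MonFormula.size_pos {n : ℕ} : ∀ F : MonFormula n, 1 ≤ F.size := by
  intro F
  induction F with
  | var v => exact le_rfl
  | const c hc => exact le_rfl
  | add F G ihF ihG => simp only [MonFormula.size]; omega
  | mul F G ihF ihG => simp only [MonFormula.size]; omega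

def OkP {n : ℕ} (p : MvPolynomial (Fin n) ℝ) : Prop :=
  (∃ j, p = X j) ∨ ∃ c : ℝ, 0 ≤ c ∧ p = MvPolynomial.C c

lemma OkP_zero {n : ℕ} : OkP (0 : MvPolynomial (Fin n) ℝ) :=
  Or.inr ⟨0, le_rfl, (map_zero MvPolynomial.C).symm⟩

lemma OkP_one {n : ℕ} : OkP (1 : MvPolynomial (Fin n) ℝ) :=
  Or.inr ⟨1, zero_le_one, (map_one MvPolynomial.C).symm⟩

lemma exists_arr {n : ℕ} (F : MonFormula n) :
    ∃ A : ℕ → ℕ → MvPolynomial (Fin n) ℝ,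
      (∀ i j, OkP (A i j)) ∧ arrP A F.size = F.toPoly := by
  induction F with
  | var v =>
    refine ⟨fun i j => if i = 0 ∧ j = 1 then X v else 0, fun i j => ?_, ?_⟩
    · show OkP (if i = 0 ∧ j = 1 then X v else 0)
      split_ifs
      · exact Or.inl ⟨v, rfl⟩
      · exact OkP_zero
    · show arrP _ 1 = X v
      rw [arrP_one]
      simp
  | const c hc =>
    refine ⟨fun i j => if i = 0 ∧ j = 1 then MvPolynomial.C c else 0, fun i j => ?_, ?_⟩
    · show OkP (if i = 0 ∧ j = 1 then MvPolynomial.C c else 0)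
      split_ifs
      · exact Or.inr ⟨c, hc, rfl⟩
      · exact OkP_zero
    · show arrP _ 1 = MvPolynomial.C c
      rw [arrP_one]
      simp
  | add F G ihF ihG =>
    obtain ⟨A, hokA, hA⟩ := ihF
    obtain ⟨B, hokB, hB⟩ := ihG
    refine ⟨parC A B F.size G.size, fun i j => ?_, ?_⟩
    · unfold parC
      split_ifs
      · exact hokA i j
      · exact OkP_one
      · exact OkP_zero
      · exact hokB 0 (j - F.size)
      · exact hokB (i - F.size) (j - F.size)
      · exact OkP_zero
    · show arrP (parC A B F.size G.size) (F.size + G.size) = F.toPoly + G.toPoly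
      rw [arrP_parC A B F.size G.size F.size_pos G.size_pos, hA, hB]
  | mul F G ihF ihG =>
    obtain ⟨A, hokA, hA⟩ := ihF
    obtain ⟨B, hokB, hB⟩ := ihG
    refine ⟨serC A B F.size, fun i j => ?_, ?_⟩
    · unfold serC
      split_ifs
      · exact hokA i j
      · exact hokB (i - F.size) (j - F.size)
      · exact OkP_zero
    · show arrP (serC A B F.size) (F.size + G.size) = F.toPoly * G.toPoly
      rw [arrP_serC A B F.size G.size, hA, hB]

/-- Monotone universality of the permanent: every polynomial computable by a monotone
formula of size `s` is a monotone simple projection of the `(s+1) × (s+1)` permanent. -/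
theorem monotone_formula_projection_of_permanent {n : ℕ} (F : MonFormula n) :
    MonotoneSimpleProjection F.toPoly (permPoly (F.size + 1)) := by
  obtain ⟨A, hok, hA⟩ := exists_arr F
  set m := F.size with hm
  have hm1 : 1 ≤ m := F.size_pos
  set Abar : ℕ → ℕ → MvPolynomial (Fin n) ℝ :=
    fun i j => if j = m+1 then (if i = m then 1 else 0) else A i j with hAbar
  have hokbar : ∀ i j, OkP (Abar i j) := by
    intro i j
    show OkP (if j = m+1 then (if i = m then (1:MvPolynomial (Fin n) ℝ) else 0) else A i j)
    split_ifs
    · exact OkP_one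
    · exact OkP_zero
    · exact hok i j
  refine ⟨fun p => CmatP Abar (m+1) p.1 p.2, ?_, ?_⟩
  · rintro ⟨i, j⟩
    show OkP (CmatP Abar (m+1) i j)
    unfold CmatP
    split_ifs
    · exact hokbar j (i+1)
    · exact OkP_one
    · exact OkP_zero
  · rw [permPoly, map_sum]
    have : ∀ σ : Equiv.Perm (Fin (m+1)),
        (aeval (fun p : Fin (m+1) × Fin (m+1) => CmatP Abar (m+1) p.1 p.2))
            (∏ i : Fin (m+1), (X (i, σ i) : MvPolynomial (Fin (m+1) × Fin (m+1)) ℝ))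
          = ∏ i : Fin (m+1), CmatP Abar (m+1) i (σ i) := by
      intro σ
      simp only [map_prod, aeval_X]
    rw [Finset.sum_congr rfl (fun σ _ => this σ), perm_CmatP (m+1) Abar, arrP_succ]
    have hbar1 : ∀ i ∈ Finset.range (m+1),
        arrP Abar i * Abar i (m+1) = if i = m then arrP Abar m else 0 := by
      intro i hi
      rw [Finset.mem_range] at hi
      rw [hAbar]
      rcases eq_or_ne i m with rfl | h
      · simp
      · simp [h]
    rw [Finset.sum_congr rfl hbar1, Finset.sum_ite_eq' (Finset.range (m+1)) m
      (fun _ => arrP Abar m), if_pos (Finset.self_mem_range_succ m)]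
    have : arrP Abar m = arrP A m := arrP_congr' m (fun i j hj => by
      rw [hAbar]; exact if_neg (by omega))
    rw [this, hA]
end

section
/- Let (P_n ⊆ ℝ^n) be integral polytopes such that the m(n)-th Birkhoff polytope is an extension of P_n along an affine map ℓ_n with integer coefficients, where m(n) is polynomially bounded. Then for each n the polynomial f_n(y) = Σ_{π ∈ S_{m(n)}} y^{ℓ_n(M_π)} (where M_π is the permutation matrix of π) has Newton polytope exactly P_n. -/
open MvPolynomial

def permMat {n : ℕ} (σ : Equiv.Perm (Fin n)) : Fin n × Fin n → ℝ :=
  fun p => if σ p.1 = p.2 then 1 else 0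

/-- The Birkhoff polytope: convex hull of the `m × m` permutation matrices. -/
noncomputable def birkhoff (m : ℕ) : Set (Fin m × Fin m → ℝ) :=
  convexHull ℝ (Set.range (permMat (n := m)))

/-!
Every coefficient of `f_n` counts the permutations with a given exponent vector, so in
characteristic zero none cancels and the support of `f_n` is exactly `{ℓ_n(M_π)}` (the floor is
harmless because these vectors are already natural). Hence `New(f_n)` is the convex hull of the
images of the permutation matrices, which is `ℓ_n(birkhoff (m n)) = P_n` since affine maps commute
with convex hulls.
-/

namespace MvPolynomial

theorem coeff_sum_monomial_one {σ ι R : Type*} [CommSemiring R] [DecidableEq σ]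
    (s : Finset ι) (d : ι → σ →₀ ℕ) (e : σ →₀ ℕ) :
    (∑ i ∈ s, monomial (d i) (1 : R)).coeff e = (s.filter (d · = e)).card := by
  simp only [coeff_sum, coeff_monomial, Finset.sum_boole]

theorem support_sum_monomial_one {σ ι R : Type*} [CommSemiring R] [CharZero R]
    [DecidableEq σ] (s : Finset ι) (d : ι → σ →₀ ℕ) :
    (∑ i ∈ s, monomial (d i) (1 : R)).support = s.image d := by
  ext e
  rw [mem_support_iff, coeff_sum_monomial_one, Nat.cast_ne_zero, ← Nat.pos_iff_ne_zero,
    Finset.card_pos, Finset.filter_nonempty_iff, Finset.mem_image]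

end MvPolynomial

theorem newton_sum_monomial_one {σ ι : Type*} [Fintype ι] (d : ι → σ →₀ ℕ) :
    newton (∑ i, monomial (d i) (1 : ℝ)) = convexHull ℝ (Set.range fun i j => (d i j : ℝ)) := by
  classical
  rw [newton, support_sum_monomial_one, Finset.coe_image, Finset.coe_univ, Set.image_univ,
    ← Set.range_comp]
  rfl

theorem newton_of_birkhoff_extension_general (n : ℕ) (m : ℕ → ℕ)
    (P : (j : ℕ) → Set (Fin j → ℝ))
    (ℓ : (j : ℕ) → ((Fin (m j) × Fin (m j)) → ℝ) →ᵃ[ℝ] (Fin j → ℝ))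
    (hext : ∀ j, (ℓ j) '' birkhoff (m j) = P j)
    (hnat : ∀ (j : ℕ) (σ : Equiv.Perm (Fin (m j))) (i : Fin j),
      ∃ k : ℕ, ℓ j (permMat σ) i = (k : ℝ)) :
    newton (∑ σ : Equiv.Perm (Fin (m n)),
        (MvPolynomial.monomial
          (Finsupp.equivFunOnFinite.symm fun i => ⌊ℓ n (permMat σ) i⌋₊) (1 : ℝ)))
      = P n := by
  have hexp : (fun σ i => ((⌊ℓ n (permMat σ) i⌋₊ : ℕ) : ℝ)) = ℓ n ∘ permMat := by
    funext σ i
    obtain ⟨k, hk⟩ := hnat n σ i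
    simp [hk]
  rw [newton_sum_monomial_one, ← hext, birkhoff, AffineMap.image_convexHull, ← Set.range_comp]
  simp only [Finsupp.coe_equivFunOnFinite_symm]
  rw [hexp]

/-- Given integral polytopes `P_j ⊆ ℝ^j` such that the `m j`-th Birkhoff polytope is an
extension of `P_j` along an affine map `ℓ j` with integer coefficients (mapping integer
points to integer points), with `m` polynomially bounded, the polynomial
`f_n(y) = ∑_{π ∈ S_{m n}} y^{ℓ_n(M_π)}` has Newton polytope exactly `P_n`. -/
theorem newton_of_birkhoff_extension (n : ℕ) (m : ℕ → ℕ)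
    (hm : ∃ C k : ℕ, ∀ j, m j ≤ C * j ^ k + C)
    (P : (j : ℕ) → Set (Fin j → ℝ))
    (hint : ∀ j, ∃ S : Finset (Fin j → ℝ), P j = convexHull ℝ (S : Set (Fin j → ℝ)) ∧
      ∀ x ∈ S, ∀ i, ∃ z : ℤ, x i = (z : ℝ))
    (ℓ : (j : ℕ) → ((Fin (m j) × Fin (m j)) → ℝ) →ᵃ[ℝ] (Fin j → ℝ))
    (hℓint : ∀ (j : ℕ) (x : (Fin (m j) × Fin (m j)) → ℝ),
      (∀ p, ∃ z : ℤ, x p = (z : ℝ)) → ∀ i, ∃ z : ℤ, ℓ j x i = (z : ℝ))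
    (hext : ∀ j, (ℓ j) '' birkhoff (m j) = P j)
    (hnat : ∀ (j : ℕ) (σ : Equiv.Perm (Fin (m j))) (i : Fin j),
      ∃ k : ℕ, ℓ j (permMat σ) i = (k : ℝ)) :
    newton (∑ σ : Equiv.Perm (Fin (m n)),
        (MvPolynomial.monomial
          (Finsupp.equivFunOnFinite.symm fun i => ⌊ℓ n (permMat σ) i⌋₊) (1 : ℝ)))
      = P n :=
  newton_of_birkhoff_extension_general n m P ℓ hext hnat
end
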